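/- Let R be a Noetherian local ring, C a semidualizing R-module, and M, N finitely generated R-modules with both Hom_R(M,N) and N in the Auslander class A_C(R). Then the natural map Φ: C ⊗_R Hom_R(M,N) → Hom_R(M, C ⊗_R N), sending c ⊗ φ to the map m ↦ c ⊗ φ(m), is an isomorphism. -/

import Mathlib

/-!
Applying `Hom_R(C, -)` to `Φ` gives a bijection: the two Auslander class conditions identify
both `Hom(C, C ⊗ Hom(M, N))` and `Hom(C, Hom(M, C ⊗ N)) ≅ Hom(M, Hom(C, C ⊗ N))` with
`Hom(M, N)`. Since `C` is faithful and finitely generated over a Noetherian ring, `Hom(C, X) ≠ 0`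
for every nonzero finitely generated `X`; applied to `X = ker Φ` this gives injectivity. For the
cokernel, `Ext¹(C, C ⊗ Hom(M, N)) = 0` lets every map `C → coker Φ` lift to `Hom(M, C ⊗ N)`,
where it factors through `Φ` and hence vanishes.
-/

open CategoryTheory Opposite

universe u

noncomputable section

/-- The Ext module `Ext^i_R(M,N)`. -/
def ExtMod (R : Type u) [CommRing R] (M N : ModuleCat.{u} R) (i : ℕ) : ModuleCat.{u} R :=
  ((Ext R (ModuleCat.{u} R) i).obj (op M)).obj N

/-- The Tor module `Tor_i^R(M,N)`. -/
def TorMod (R : Type u) [CommRing R] (M N : ModuleCat.{u} R) (i : ℕ) : ModuleCat.{u} R :=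
  ((Tor (ModuleCat.{u} R) i).obj M).obj N

/-- The depth of a module over a local ring, as the least `i` with
`Ext^i(k, M) ≠ 0`. -/
def moduleDepth (R : Type u) [CommRing R] [IsLocalRing R] (M : ModuleCat.{u} R) : ℕ∞ :=
  sInf {i : ℕ∞ | ∃ n : ℕ, i = n ∧
    Nontrivial (ExtMod R (ModuleCat.of R (IsLocalRing.ResidueField R)) M n)}

/-- A Cohen-Macaulay local ring of dimension `d`. -/
def IsCMLocalOfDim (R : Type u) [CommRing R] [IsLocalRing R] [IsNoetherianRing R] (d : ℕ) : Prop :=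
  ringKrullDim R = d ∧ moduleDepth R (ModuleCat.of R R) = d

/-- Totally reflexive modules. -/
def TotallyReflexive (R : Type u) [CommRing R] (M : Type u) [AddCommGroup M] [Module R M] : Prop :=
  Function.Bijective (Module.Dual.eval R M) ∧
  ∀ i : ℕ, 1 ≤ i →
    Subsingleton (ExtMod R (ModuleCat.of R M) (ModuleCat.of R R) i) ∧
    Subsingleton (ExtMod R (ModuleCat.of R (Module.Dual R M)) (ModuleCat.of R R) i)

/-- `GdimLE R n M` : the Gorenstein dimension of `M` is at most `n`. -/
def GdimLE (R : Type u) [CommRing R] : ℕ → ModuleCat.{u} R → Prop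
  | 0, M => TotallyReflexive R M
  | (n+1), M => ∃ (G : ModuleCat.{u} R) (g : G →ₗ[R] M), Module.Finite R G ∧
      TotallyReflexive R G ∧ Function.Surjective g ∧
      GdimLE R n (ModuleCat.of R (LinearMap.ker g))

/-- Finite Gorenstein dimension. -/
def FiniteGdim (R : Type u) [CommRing R] (M : Type u) [AddCommGroup M] [Module R M] : Prop :=
  ∃ n, GdimLE R n (ModuleCat.of R M)

/-- `PdLE R n M` : the projective dimension of `M` is at most `n`. -/
def PdLE (R : Type u) [CommRing R] : ℕ → ModuleCat.{u} R → Prop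
  | 0, M => Module.Projective R M
  | (n+1), M => ∃ (G : ModuleCat.{u} R) (g : G →ₗ[R] M), Module.Projective R G ∧
      Function.Surjective g ∧ PdLE R n (ModuleCat.of R (LinearMap.ker g))

/-- Finite projective dimension. -/
def FinitePd (R : Type u) [CommRing R] (M : Type u) [AddCommGroup M] [Module R M] : Prop :=
  ∃ n, PdLE R n (ModuleCat.of R M)

/-- A semidualizing module. -/
def Semidualizing (R : Type u) [CommRing R] (C : Type u) [AddCommGroup C] [Module R C] : Prop :=
  Module.Finite R C ∧
  Function.Bijective (LinearMap.toSpanSingleton R (C →ₗ[R] C) LinearMap.id) ∧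
  ∀ i : ℕ, 1 ≤ i → Subsingleton (ExtMod R (ModuleCat.of R C) (ModuleCat.of R C) i)

/-- Membership in the Auslander class with respect to `C`. -/
def InAuslanderClass (R : Type u) [CommRing R] (C : Type u) [AddCommGroup C] [Module R C]
    (X : Type u) [AddCommGroup X] [Module R X] : Prop :=
  Function.Bijective ((TensorProduct.mk R C X).flip) ∧
  (∀ i : ℕ, 1 ≤ i → Subsingleton (TorMod R (ModuleCat.of R C) (ModuleCat.of R X) i)) ∧
  (∀ i : ℕ, 1 ≤ i →
    Subsingleton (ExtMod R (ModuleCat.of R C) (ModuleCat.of R (TensorProduct R C X)) i))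

/-- Height of a prime ideal. -/
def primeHt (R : Type u) [CommRing R] (p : Ideal R) (hp : p.IsPrime) : ℕ∞ :=
  Order.height (⟨p, hp⟩ : PrimeSpectrum R)

/-- Finite injective dimension, via vanishing of `Ext` in high degrees. -/
def FiniteInjDim (R : Type u) [CommRing R] (M : Type u) [AddCommGroup M] [Module R M] : Prop :=
  ∃ n : ℕ, ∀ (N : ModuleCat.{u} R) (i : ℕ), n < i →
    Subsingleton (ExtMod R N (ModuleCat.of R M) i)

/-- A canonical (dualizing) module over a Cohen-Macaulay local ring:
a semidualizing module of finite injective dimension. -/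
def IsCanonicalModule (R : Type u) [CommRing R] (w : Type u) [AddCommGroup w] [Module R w] : Prop :=
  Semidualizing R w ∧ FiniteInjDim R w

end

namespace CategoryTheory

variable {R : Type*} [Ring R] {C : Type*} [Category C] [Abelian C] [Linear R C] [EnoughProjectives C]

theorem ProjectiveResolution.exists_d_comp_eq_of_subsingleton_ext_one {X Y : C}
    (P : ProjectiveResolution X) [Subsingleton (((Ext R C 1).obj (Opposite.op X)).obj Y)]
    (u : P.complex.X 1 ⟶ Y) (hu : P.complex.d 2 1 ≫ u = 0) :
    ∃ v : P.complex.X 0 ⟶ Y, P.complex.d 1 0 ≫ v = u := by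
  let K := P.complex.linearYonedaObj R Y
  have hK : (K.sc' 0 1 2).Exact :=
    (K.exactAt_iff' 0 1 2 (by simp) (by simp)).1 <| (K.exactAt_iff_isZero_homology 1).2 <|
      (ModuleCat.isZero_of_subsingleton _).of_iso (P.isoExt 1 Y).symm
  exact (ShortComplex.moduleCat_exact_iff _).1 hK u hu

theorem ShortComplex.ShortExact.exists_comp_g_eq_of_subsingleton_ext_one {S : ShortComplex C}
    (hS : S.ShortExact) {X : C} [Subsingleton (((Ext R C 1).obj (Opposite.op X)).obj S.X₁)]
    (h : X ⟶ S.X₃) : ∃ h' : X ⟶ S.X₂, h' ≫ S.g = h := by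
  have := hS.mono_f
  have := hS.epi_g
  let P := projectiveResolution X
  let π₀ : P.complex.X 0 ⟶ X := P.π.f 0
  have : Epi π₀ := inferInstanceAs (Epi (P.π.f 0))
  have hd : P.complex.d 1 0 ≫ π₀ = 0 := P.complex_d_comp_π_f_zero
  have hπ₀ : (ShortComplex.mk _ π₀ hd).Exact := P.exact₀
  let k : P.complex.X 0 ⟶ S.X₂ := Projective.factorThru (π₀ ≫ h) S.g
  have hk : k ≫ S.g = π₀ ≫ h := Projective.factorThru_comp _ _
  let u := hS.exact.lift (P.complex.d 1 0 ≫ k) <| by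
    rw [Category.assoc, hk, ← Category.assoc, hd, Limits.zero_comp]
  have hu : u ≫ S.f = P.complex.d 1 0 ≫ k := hS.exact.lift_f _ _
  obtain ⟨v, hv⟩ := P.exists_d_comp_eq_of_subsingleton_ext_one (R := R) u <| by
    rw [← cancel_mono S.f, Category.assoc, hu, HomologicalComplex.d_comp_d_assoc,
      Limits.zero_comp, Limits.zero_comp]
  let θ := k - v ≫ S.f
  have hθ : P.complex.d 1 0 ≫ θ = 0 := by
    rw [Preadditive.comp_sub, ← Category.assoc, hv, hu, sub_self]
  refine ⟨hπ₀.desc θ hθ, (cancel_epi π₀).1 ?_⟩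
  rw [hπ₀.g_desc_assoc, Preadditive.sub_comp, hk, Category.assoc, S.zero, Limits.comp_zero,
    sub_zero]

end CategoryTheory

section

variable {R : Type u} [CommRing R] {C : Type u} [AddCommGroup C] [Module R C]

theorem Semidualizing.faithfulSMul (hC : Semidualizing R C) : FaithfulSMul R C :=
  ⟨fun h ↦ hC.2.1.1 (LinearMap.ext h)⟩

variable [IsNoetherianRing R] [Module.Finite R C] [FaithfulSMul R C]

theorem nontrivial_linearMap_of_faithfulSMul (X : Type u) [AddCommGroup X] [Module R X]
    [Module.Finite R X] [Nontrivial X] : Nontrivial (C →ₗ[R] X) := by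
  rw [← not_subsingleton_iff_nontrivial, IsSMulRegular.subsingleton_linearMap_iff,
    Module.annihilator_eq_bot.2 inferInstance]
  rintro ⟨r, hr, hreg⟩
  rw [(Submodule.mem_bot R).1 hr, IsSMulRegular.zero_iff_subsingleton] at hreg
  exact not_subsingleton X hreg

variable {V W : Type u} [AddCommGroup V] [Module R V] [AddCommGroup W] [Module R W]

theorem LinearMap.injective_of_injective_comp [Module.Finite R V] (f : V →ₗ[R] W)
    (hf : Function.Injective fun ψ : C →ₗ[R] V ↦ f ∘ₗ ψ) : Function.Injective f := by
  rw [← LinearMap.ker_eq_bot]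
  by_contra hker
  have := Submodule.nontrivial_iff_ne_bot.2 hker
  have := nontrivial_linearMap_of_faithfulSMul (R := R) (C := C) (LinearMap.ker f)
  obtain ⟨g, hg⟩ := exists_ne (0 : C →ₗ[R] LinearMap.ker f)
  have hzero : (LinearMap.ker f).subtype ∘ₗ g = 0 := hf <| by
    ext c
    simp
  exact hg (LinearMap.ext fun c ↦ Subtype.ext (LinearMap.congr_fun hzero c))

theorem LinearMap.surjective_of_surjective_comp [Module.Finite R W] (f : V →ₗ[R] W)
    (hf : Function.Injective f) (hext : Subsingleton (ExtMod R (.of R C) (.of R V) 1))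
    (hsurj : Function.Surjective fun ψ : C →ₗ[R] V ↦ f ∘ₗ ψ) : Function.Surjective f := by
  rw [← LinearMap.range_eq_top]
  by_contra hrange
  have := Submodule.Quotient.nontrivial_iff.2 hrange
  have := nontrivial_linearMap_of_faithfulSMul (R := R) (C := C) (W ⧸ LinearMap.range f)
  obtain ⟨g, hg⟩ := exists_ne (0 : C →ₗ[R] W ⧸ LinearMap.range f)
  let S := ModuleCat.shortComplexOfCompEqZero f (LinearMap.range f).mkQ (by ext; simp)
  have hS : S.ShortExact := ModuleCat.shortComplex_shortExact S
    (LinearMap.exact_iff.2 (Submodule.ker_mkQ _)) hf (Submodule.mkQ_surjective _)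
  have : Subsingleton (((Ext R (ModuleCat R) 1).obj (op (.of R C))).obj S.X₁) := hext
  obtain ⟨h, hh⟩ := hS.exists_comp_g_eq_of_subsingleton_ext_one (R := R) (ModuleCat.ofHom g)
  obtain ⟨ψ, hψ⟩ := hsurj h.hom
  refine hg (LinearMap.ext fun c ↦ ?_)
  rw [← ModuleCat.hom_ofHom g, ← hh, ModuleCat.hom_comp, ← hψ]
  simp [S]

end

open TensorProduct in
theorem bijective_lTensorHomToHomLTensor_comp {R : Type*} [CommRing R] {C M N : Type*}
    [AddCommGroup C] [Module R C] [AddCommGroup M] [Module R M] [AddCommGroup N] [Module R N]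
    (hMN : Function.Bijective (TensorProduct.mk R C (M →ₗ[R] N)).flip)
    (hN : Function.Bijective (TensorProduct.mk R C N).flip) :
    Function.Bijective
      fun ψ : C →ₗ[R] C ⊗[R] (M →ₗ[R] N) ↦ lTensorHomToHomLTensor (.id R) M C N ∘ₗ ψ := by
  have hcomp : (fun ψ : C →ₗ[R] C ⊗[R] (M →ₗ[R] N) ↦ lTensorHomToHomLTensor (.id R) M C N ∘ₗ ψ)
      ∘ (TensorProduct.mk R C (M →ₗ[R] N)).flip =
      ((LinearEquiv.congrRight (LinearEquiv.ofBijective _ hN)).trans (LinearMap.lflip (R₀ := R)) :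
        (M →ₗ[R] N) → C →ₗ[R] M →ₗ[R] C ⊗[R] N) := by
    ext f c m
    rfl
  rw [← Function.Bijective.of_comp_iff _ hMN, hcomp]
  exact LinearEquiv.bijective _

theorem stmt1_general (R : Type u) [CommRing R] [IsNoetherianRing R]
    (C M N : Type u) [AddCommGroup C] [Module R C] [AddCommGroup M] [Module R M]
    [AddCommGroup N] [Module R N] [Module.Finite R M] [Module.Finite R N]
    (hC : Semidualizing R C)
    (h1 : InAuslanderClass R C (M →ₗ[R] N)) (h2 : InAuslanderClass R C N) :
    Function.Bijective (TensorProduct.lTensorHomToHomLTensor (σ₁₂ := RingHom.id R) (P := M) (M₂ := C) (N₂ := N)) := by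
  have := hC.1
  have := hC.faithfulSMul
  have hcomp := bijective_lTensorHomToHomLTensor_comp h1.1 h2.1
  have hinj := LinearMap.injective_of_injective_comp _ hcomp.1
  exact ⟨hinj, LinearMap.surjective_of_surjective_comp _ hinj (h1.2.2 1 le_rfl) hcomp.2⟩

theorem stmt1 (R : Type u) [CommRing R] [IsLocalRing R] [IsNoetherianRing R]
    (C M N : Type u) [AddCommGroup C] [Module R C] [AddCommGroup M] [Module R M]
    [AddCommGroup N] [Module R N] [Module.Finite R M] [Module.Finite R N]
    (hC : Semidualizing R C)
    (h1 : InAuslanderClass R C (M →ₗ[R] N)) (h2 : InAuslanderClass R C N) :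
    Function.Bijective (TensorProduct.lTensorHomToHomLTensor (σ₁₂ := RingHom.id R) (P := M) (M₂ := C) (N₂ := N)) :=
  stmt1_general R C M N hC h1 h2
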